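/- There is a bijection between RP_n and the set of sequences of length 2(n+1) consisting of exactly n+1 entries equal to +1 and n+1 entries equal to −1, all of whose partial sums are nonnegative. -/

import Mathlib

/-- A partial map on `Fin n`, representing a rook-type diagram: the function
goes from the top row of vertices to the bottom row. -/
abbrev PMap (n : ℕ) := Fin n → Option (Fin n)

/-- Diagram multiplication `f ⬝ g`: stack `f` on top of `g`, i.e. apply `f` first. -/
def pcomp {n : ℕ} (f g : PMap n) : PMap n := fun i => (f i).bind g

/-- The identity diagram. -/
def pid (n : ℕ) : PMap n := fun i => some i

infixl:70 " ⬝ " => pcomp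

/-- The generator `r i` (0-indexed): sends vertex `i+1` on top to vertex `i`
on the bottom, is undefined at `i`, and fixes all other vertices. -/
def rmap (n i : ℕ) : PMap n := fun j =>
  if (j : ℕ) = i then none
  else if (j : ℕ) = i + 1 then (if h : i < n then some ⟨i, h⟩ else none)
  else some j

/-- The generator `l i` (0-indexed): sends vertex `i` on top to vertex `i+1`
on the bottom, is undefined at `i+1`, and fixes all other vertices. -/
def lmap (n i : ℕ) : PMap n := fun j =>
  if (j : ℕ) = i + 1 then none
  else if (j : ℕ) = i then (if h : i + 1 < n then some ⟨i + 1, h⟩ else none)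
  else some j

/-- The idempotent `p i` (0-indexed): the partial identity undefined at vertex `i`. -/
def pmapd (n i : ℕ) : PMap n := fun j =>
  if (j : ℕ) = i then none else some j

/-- `f` is a partial injection. -/
def IsInj {n : ℕ} (f : PMap n) : Prop :=
  ∀ i j a, f i = some a → f j = some a → i = j

/-- `f` is order-preserving on its domain. -/
def IsOrd {n : ℕ} (f : PMap n) : Prop :=
  ∀ i j a b, f i = some a → f j = some b → i < j → a < b

/-- Right-planar condition: each bottom endpoint is weakly to the left of its top endpoint. -/
def IsRtop {n : ℕ} (f : PMap n) : Prop := ∀ i a, f i = some a → a ≤ i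

/-- Left-planar condition: each bottom endpoint is weakly to the right of its top endpoint. -/
def IsLtop {n : ℕ} (f : PMap n) : Prop := ∀ i a, f i = some a → i ≤ a

/-!
An element `f` of `RP_n` is recorded by `c t`, the least top vertex `i` with `t ≤ f i` (or `n` if
there is none). Then `c` is a monotone self-map of `Fin (n + 1)` with `t ≤ c t`, and `f` is read off
from the jumps of `c`: `f i = t` iff `c t = i < c (t + 1)`. Such a `c` is in turn the lattice path
with `c t + 1` up-steps before its `(t + 1)`-st down-step; `t ≤ c t` is the ballot condition and
`c n = n` says that there are `n + 1` up-steps. This is the encoding of the paper: with the pairs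
`(a_j, b_j)` indexed from `1`, its `(t + 1)`-st down-step is preceded by `a_j` up-steps for the
least `j` with `t < b_j`, and that `a_j` is `c t + 1`.
-/

abbrev RP (n : ℕ) := {f : PMap n // IsInj f ∧ IsOrd f ∧ IsRtop f}

abbrev MonotoneInflationary (n : ℕ) := {c : Fin (n + 1) → Fin (n + 1) // Monotone c ∧ ∀ t, t ≤ c t}

abbrev BallotSeq (n : ℕ) := {L : List ℤ // L.length = 2 * (n + 1) ∧ (∀ x ∈ L, x = 1 ∨ x = -1) ∧
  L.count 1 = n + 1 ∧ ∀ m : ℕ, 0 ≤ (L.take m).sum}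

lemma IsOrd.isInj {n : ℕ} {f : PMap n} (hf : IsOrd f) : IsInj f := by
  intro i j a hi hj
  by_contra hne
  rcases lt_or_gt_of_ne hne with h | h
  · exact lt_irrefl a (hf i j a a hi hj h)
  · exact lt_irrefl a (hf j i a a hj hi h)

lemma Monotone.exists_jump_of_lt_last {α : Type*} [PartialOrder α] {n : ℕ}
    {c : Fin (n + 1) → α} (hc : Monotone c) {t : Fin (n + 1)} (ht : c t < c (Fin.last n)) :
    ∃ v : Fin n, t ≤ v.castSucc ∧ c v.castSucc = c t ∧ c t < c v.succ := by
  induction t using Fin.reverseInduction with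
  | last => exact absurd ht (lt_irrefl _)
  | cast v ih =>
    by_cases hv : c v.castSucc < c v.succ
    · exact ⟨v, le_rfl, rfl, hv⟩
    · have heq : c v.castSucc = c v.succ :=
        eq_of_le_of_not_lt (hc (Fin.castSucc_le_succ v)) hv
      obtain ⟨w, hvw, hw, hlt⟩ := ih (heq ▸ ht)
      exact ⟨w, (Fin.castSucc_le_succ v).trans hvw, hw.trans heq.symm, heq ▸ hlt⟩

namespace PMap

variable {n : ℕ}

def topsAbove (f : PMap n) (t : ℕ) : Finset ℕ :=
  insert n ((Finset.univ.filter fun i : Fin n => ∃ v, f i = some v ∧ t ≤ (v : ℕ)).image Fin.val)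

lemma topsAbove_nonempty (f : PMap n) (t : ℕ) : (f.topsAbove t).Nonempty :=
  Finset.insert_nonempty _ _

def firstAbove (f : PMap n) (t : ℕ) : ℕ := (f.topsAbove t).min' (f.topsAbove_nonempty t)

variable {f : PMap n} {t : ℕ}

lemma mem_topsAbove {y : ℕ} :
    y ∈ f.topsAbove t ↔ y = n ∨ ∃ i : Fin n, (∃ v, f i = some v ∧ t ≤ (v : ℕ)) ∧ (i : ℕ) = y := by
  simp [topsAbove]

lemma le_firstAbove_iff {m : ℕ} :
    m ≤ f.firstAbove t ↔ m ≤ n ∧ ∀ i v, f i = some v → t ≤ (v : ℕ) → m ≤ i := by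
  rw [firstAbove, Finset.le_min'_iff]
  constructor
  · intro h
    exact ⟨h n (mem_topsAbove.2 (Or.inl rfl)),
      fun i v hv ht => h i (mem_topsAbove.2 (Or.inr ⟨i, ⟨v, hv, ht⟩, rfl⟩))⟩
  · rintro ⟨hn, h⟩ y hy
    rcases mem_topsAbove.1 hy with rfl | ⟨i, ⟨v, hv, ht⟩, rfl⟩
    exacts [hn, h i v hv ht]

lemma firstAbove_le_of_apply {i v : Fin n} (h : f i = some v) (ht : t ≤ v) : f.firstAbove t ≤ i :=
  Finset.min'_le _ _ (mem_topsAbove.2 (Or.inr ⟨i, ⟨v, h, ht⟩, rfl⟩))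

lemma firstAbove_le (f : PMap n) (t : ℕ) : f.firstAbove t ≤ n :=
  Finset.min'_le _ _ (Finset.mem_insert_self _ _)

lemma exists_apply_of_firstAbove_lt (h : f.firstAbove t < n) :
    ∃ i v, f i = some v ∧ t ≤ (v : ℕ) ∧ (i : ℕ) = f.firstAbove t := by
  rcases mem_topsAbove.1 (Finset.min'_mem _ (f.topsAbove_nonempty t)) with
    hn | ⟨i, ⟨v, hv, htv⟩, hi⟩
  · exact absurd hn (ne_of_lt h)
  · exact ⟨i, v, hv, htv, hi⟩

lemma monotone_firstAbove (f : PMap n) : Monotone f.firstAbove := fun _ _ hab =>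
  le_firstAbove_iff.2 ⟨firstAbove_le f _, fun _ _ h hb => firstAbove_le_of_apply h (hab.trans hb)⟩

lemma le_firstAbove (hf : IsRtop f) (ht : t ≤ n) : t ≤ f.firstAbove t :=
  le_firstAbove_iff.2 ⟨ht, fun i v h hv => hv.trans (hf i v h)⟩

lemma apply_eq_some_iff (hf : IsOrd f) {i v : Fin n} :
    f i = some v ↔ f.firstAbove v = i ∧ f.firstAbove v < f.firstAbove (v + 1) := by
  constructor
  · intro h
    have hle : (i : ℕ) ≤ f.firstAbove v := by
      refine le_firstAbove_iff.2 ⟨i.isLt.le, fun j w hj hvw => ?_⟩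
      by_contra! hji
      exact absurd (hf j i w v hj h hji) (not_lt.2 hvw)
    have hlt : (i : ℕ) < f.firstAbove (v + 1) := by
      refine le_firstAbove_iff.2 ⟨i.isLt, fun j w hj hvw => ?_⟩
      by_contra! hji
      rcases (Nat.lt_succ_iff.1 hji).lt_or_eq with hji | hji
      · exact absurd (hf j i w v hj h hji) (by rw [Fin.lt_def]; omega)
      · rw [Fin.ext hji, h, Option.some_inj] at hj
        omega
    have heq := le_antisymm (firstAbove_le_of_apply h le_rfl) hle
    exact ⟨heq, heq ▸ hlt⟩
  · rintro ⟨hi, hjump⟩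
    obtain ⟨j, w, hj, hvw, hji⟩ := exists_apply_of_firstAbove_lt (hi ▸ i.isLt)
    have hwv : (w : ℕ) = v := by
      by_contra hne
      have := firstAbove_le_of_apply (t := v + 1) hj (by omega)
      omega
    rwa [← Fin.ext (hji.trans hi), ← Fin.ext hwv]

def firstAboveFun (f : PMap n) (t : Fin (n + 1)) : Fin (n + 1) :=
  ⟨f.firstAbove t, Nat.lt_succ_of_le (f.firstAbove_le t)⟩

lemma monotone_firstAboveFun (f : PMap n) : Monotone f.firstAboveFun :=
  fun _ _ hab => f.monotone_firstAbove hab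

lemma le_firstAboveFun (hf : IsRtop f) (t : Fin (n + 1)) : t ≤ f.firstAboveFun t :=
  le_firstAbove hf (Nat.lt_succ_iff.1 t.isLt)

def ofJumps (c : Fin (n + 1) → Fin (n + 1)) : PMap n := fun i =>
  Fin.find? fun t => c t.castSucc = i.castSucc ∧ c t.castSucc < c t.succ

variable {c : Fin (n + 1) → Fin (n + 1)}

lemma ofJumps_eq_some_iff (hc : Monotone c) {i t : Fin n} :
    ofJumps c i = some t ↔ c t.castSucc = i.castSucc ∧ c t.castSucc < c t.succ := by
  have unique : ∀ s u : Fin n, s < u → c s.castSucc = i.castSucc → c s.castSucc < c s.succ →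
      c u.castSucc ≠ i.castSucc := fun s u hsu hs hjump hu =>
    (hjump.trans_le (hc (Fin.succ_le_castSucc_iff.2 hsu))).ne (hs.trans hu.symm)
  rw [ofJumps, Fin.find?_eq_some_iff, decide_eq_true_iff]
  exact ⟨And.left, fun ht =>
    ⟨ht, fun s hst => decide_eq_false fun hs => unique s t hst hs.1 hs.2 ht.1⟩⟩

lemma isOrd_ofJumps (hc : Monotone c) : IsOrd (ofJumps c) := by
  intro i j s u hi hj hij
  rw [ofJumps_eq_some_iff hc] at hi hj
  by_contra! hus
  have hji : j.castSucc ≤ i.castSucc := hj.1 ▸ hi.1 ▸ hc (Fin.castSucc_le_castSucc_iff.2 hus)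
  exact absurd hij (not_lt.2 (Fin.castSucc_le_castSucc_iff.1 hji))

lemma isRtop_ofJumps (hc : Monotone c) (hinf : ∀ t, t ≤ c t) : IsRtop (ofJumps c) := by
  intro i t h
  rw [ofJumps_eq_some_iff hc] at h
  exact Fin.castSucc_le_castSucc_iff.1 (h.1 ▸ hinf t.castSucc)

lemma ofJumps_firstAboveFun (hf : IsOrd f) : ofJumps f.firstAboveFun = f := by
  funext i
  refine Option.ext fun t => ?_
  rw [ofJumps_eq_some_iff f.monotone_firstAboveFun, apply_eq_some_iff hf]
  simp [firstAboveFun, Fin.ext_iff, Fin.lt_def]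

lemma firstAboveFun_ofJumps (hc : Monotone c) (hinf : ∀ t, t ≤ c t) :
    (ofJumps c).firstAboveFun = c := by
  funext t
  refine Fin.ext (le_antisymm ?_ ?_)
  · rcases (Nat.lt_succ_iff.1 (c t).isLt).lt_or_eq with hlt | hn
    · have hlast : c t < c (Fin.last n) :=
        lt_of_lt_of_le (by simpa [Fin.lt_def] using hlt) (hinf (Fin.last n))
      obtain ⟨v, htv, hv, hjump⟩ := hc.exists_jump_of_lt_last hlast
      have : ofJumps c ⟨c t, hlt⟩ = some v := (ofJumps_eq_some_iff hc).2 ⟨hv, hv ▸ hjump⟩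
      exact firstAbove_le_of_apply this htv
    · exact hn.symm ▸ (ofJumps c).firstAbove_le t
  · refine le_firstAbove_iff.2 ⟨Nat.lt_succ_iff.1 (c t).isLt, fun i v h htv => ?_⟩
    have hi := ((ofJumps_eq_some_iff hc).1 h).1
    simpa [hi, Fin.le_def] using hc (Fin.le_def.2 htv : t ≤ v.castSucc)

end PMap

def PMap.equivMonotoneInflationary (n : ℕ) : RP n ≃ MonotoneInflationary n where
  toFun f := ⟨f.1.firstAboveFun, f.1.monotone_firstAboveFun, PMap.le_firstAboveFun f.2.2.2⟩
  invFun c := ⟨PMap.ofJumps c.1, (PMap.isOrd_ofJumps c.2.1).isInj, PMap.isOrd_ofJumps c.2.1,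
    PMap.isRtop_ofJumps c.2.1 c.2.2⟩
  left_inv f := Subtype.ext (PMap.ofJumps_firstAboveFun f.2.2.1)
  right_inv c := Subtype.ext (PMap.firstAboveFun_ofJumps c.2.1 c.2.2)

section BallotSequences

open List

def upsBefore : List ℤ → ℕ → ℕ
  | [], _ => 0
  | x :: L, 0 => if x = -1 then 0 else upsBefore L 0 + 1
  | x :: L, t + 1 => if x = -1 then upsBefore L t else upsBefore L (t + 1) + 1

variable {L : List ℤ}

@[simp] lemma upsBefore_one_cons (L : List ℤ) (t : ℕ) :
    upsBefore (1 :: L) t = upsBefore L t + 1 := by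
  cases t <;> simp [upsBefore]

@[simp] lemma upsBefore_neg_one_cons_zero (L : List ℤ) : upsBefore (-1 :: L) 0 = 0 := by
  simp [upsBefore]

@[simp] lemma upsBefore_neg_one_cons_succ (L : List ℤ) (t : ℕ) :
    upsBefore (-1 :: L) (t + 1) = upsBefore L t := by
  simp [upsBefore]

@[simp] lemma upsBefore_replicate_append (r : ℕ) (L : List ℤ) (t : ℕ) :
    upsBefore (replicate r 1 ++ L) t = r + upsBefore L t := by
  induction r with
  | zero => simp
  | succ r ih => rw [replicate_succ, cons_append, upsBefore_one_cons, ih]; omega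

lemma monotone_upsBefore (hL : ∀ x ∈ L, x = 1 ∨ x = -1) : Monotone (upsBefore L) := by
  induction L with
  | nil => exact fun _ _ _ => le_rfl
  | cons x L ih =>
    obtain ⟨hx, htail⟩ := forall_mem_cons.1 hL
    have ih := ih htail
    rcases hx with rfl | rfl
    · exact fun a b hab => by simpa using ih hab
    · rintro (_ | a) (_ | b) hab
      · exact le_rfl
      · simp
      · omega
      · simpa using ih (Nat.succ_le_succ_iff.1 hab)

lemma upsBefore_le_count_one (hL : ∀ x ∈ L, x = 1 ∨ x = -1) (t : ℕ) :
    upsBefore L t ≤ L.count 1 := by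
  induction L generalizing t with
  | nil => simp [upsBefore]
  | cons x L ih =>
    obtain ⟨hx, htail⟩ := forall_mem_cons.1 hL
    have ih := ih htail
    rcases hx with rfl | rfl
    · simpa using ih t
    · cases t <;> simp [ih]

lemma length_eq_count_one_add_count_neg_one (hL : ∀ x ∈ L, x = 1 ∨ x = -1) :
    L.length = L.count 1 + L.count (-1) := by
  induction L with
  | nil => simp
  | cons x L ih =>
    obtain ⟨hx, htail⟩ := forall_mem_cons.1 hL
    rcases hx with rfl | rfl <;> simp [ih htail] <;> omega

lemma exists_eq_replicate_append_neg_one_cons (hL : ∀ x ∈ L, x = 1 ∨ x = -1)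
    (h : (-1 : ℤ) ∈ L) : ∃ r L', L = replicate r 1 ++ -1 :: L' := by
  induction L with
  | nil => simp at h
  | cons x L ih =>
    obtain ⟨hx, htail⟩ := forall_mem_cons.1 hL
    rcases hx with rfl | rfl
    · obtain ⟨r, L', rfl⟩ := ih htail (by simpa using h)
      exact ⟨r + 1, L', by simp [replicate_succ]⟩
    · exact ⟨0, L, rfl⟩

lemma forall_nonneg_add_sum_take_cons {x s : ℤ} (hs : 0 ≤ s) :
    (∀ m, 0 ≤ s + ((x :: L).take m).sum) ↔ ∀ m, 0 ≤ (s + x) + (L.take m).sum := by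
  refine ⟨fun h m => by simpa [add_assoc] using h (m + 1), fun h m => ?_⟩
  cases m with
  | zero => simpa using hs
  | succ m => simpa [add_assoc] using h m

lemma forall_nonneg_add_sum_take_iff (hL : ∀ x ∈ L, x = 1 ∨ x = -1) {s : ℤ} (hs : 0 ≤ s) :
    (∀ m, 0 ≤ s + (L.take m).sum) ↔ ∀ t < L.count (-1), (t : ℤ) + 1 ≤ s + upsBefore L t := by
  induction L generalizing s with
  | nil => simp [hs]
  | cons x L ih =>
    obtain ⟨hx, htail⟩ := forall_mem_cons.1 hL
    rw [forall_nonneg_add_sum_take_cons hs]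
    rcases hx with rfl | rfl
    · rw [ih htail (by linarith)]
      simp only [count_cons_of_ne (by decide : (1 : ℤ) ≠ -1), upsBefore_one_cons]
      push_cast
      ring_nf
    · by_cases hs1 : 1 ≤ s
      · rw [ih htail (by linarith), count_cons_self, Nat.forall_lt_succ_left]
        simp only [upsBefore_neg_one_cons_zero, upsBefore_neg_one_cons_succ, Nat.cast_zero,
          zero_add, add_zero, hs1, true_and, Nat.cast_succ]
        exact forall₂_congr fun t _ => by constructor <;> intro h <;> linarith
      · refine iff_of_false (fun h => hs1 ?_) (fun h => hs1 ?_)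
        · simpa using h 0
        · simpa using h 0 (by simp)

/-- The `±1`-sequence with `k` down-steps, written after `p` up-steps have already been
placed, whose `(t+1)`-st down-step is preceded by `g t` up-steps in total. -/
def ofUpCounts : (k : ℕ) → ℕ → (Fin k → ℕ) → List ℤ
  | 0, _, _ => []
  | k + 1, p, g => replicate (g 0 - p) 1 ++ -1 :: ofUpCounts k (g 0) (Fin.tail g)

lemma mem_ofUpCounts {k p : ℕ} {g : Fin k → ℕ} {x : ℤ} (hx : x ∈ ofUpCounts k p g) :
    x = 1 ∨ x = -1 := by
  induction k generalizing p with
  | zero => simp [ofUpCounts] at hx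
  | succ k ih =>
    simp only [ofUpCounts, mem_append, mem_replicate, mem_cons] at hx
    rcases hx with h | h | h
    exacts [Or.inl h.2, Or.inr h, ih h]

lemma count_neg_one_ofUpCounts (k p : ℕ) (g : Fin k → ℕ) : (ofUpCounts k p g).count (-1) = k := by
  induction k generalizing p with
  | zero => rfl
  | succ k ih => simp [ofUpCounts, count_replicate, ih]

variable {k p : ℕ} {g : Fin k → ℕ}

lemma count_one_ofUpCounts {g : Fin (k + 1) → ℕ} (hg : Monotone g) (hp : ∀ t, p ≤ g t) :
    p + (ofUpCounts (k + 1) p g).count 1 = g (Fin.last k) := by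
  induction k generalizing p with
  | zero =>
    simp only [ofUpCounts, count_append, count_cons_of_ne (by decide : (-1 : ℤ) ≠ 1),
      count_replicate_self, count_nil, add_zero, Fin.last_zero]
    have hp0 := hp 0
    omega
  | succ k ih =>
    have h : g 0 + (ofUpCounts (k + 1) (g 0) (Fin.tail g)).count 1 = g (Fin.last (k + 1)) :=
      ih (hg.comp Fin.strictMono_succ.monotone) (fun t => hg (Fin.zero_le t.succ))
    rw [ofUpCounts, count_append, count_cons_of_ne (by decide), count_replicate_self]
    have hp0 := hp 0
    omega

lemma upsBefore_ofUpCounts (hg : Monotone g) (hp : ∀ t, p ≤ g t) (t : Fin k) :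
    p + upsBefore (ofUpCounts k p g) t = g t := by
  induction k generalizing p with
  | zero => exact t.elim0
  | succ k ih =>
    rw [ofUpCounts, upsBefore_replicate_append]
    induction t using Fin.cases with
    | zero => simp [hp 0]
    | succ t =>
      rw [Fin.val_succ, upsBefore_neg_one_cons_succ]
      have h : g 0 + upsBefore (ofUpCounts k (g 0) (Fin.tail g)) t = g t.succ :=
        ih (hg.comp Fin.strictMono_succ.monotone) (fun t => hg (Fin.zero_le t.succ)) t
      have hp0 := hp 0
      omega

lemma ofUpCounts_upsBefore (hL : ∀ x ∈ L, x = 1 ∨ x = -1) (hk : L.count (-1) = k + 1)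
    (hlast : L.count 1 ≤ upsBefore L k) (p : ℕ) :
    ofUpCounts (k + 1) p (fun t => p + upsBefore L t) = L := by
  induction k generalizing L p with
  | zero =>
    obtain ⟨r, L', rfl⟩ := exists_eq_replicate_append_neg_one_cons hL (count_pos_iff.1 (by omega))
    have hL' : ∀ y ∈ L', y = 1 ∨ y = -1 := fun y hy => hL y (by simp [hy])
    have hk' : L'.count (-1) = 0 := by simpa [count_replicate] using hk
    have h1 : L'.count 1 = 0 := by simpa [count_replicate] using hlast
    obtain rfl : L' = [] :=
      length_eq_zero_iff.1 (by rw [length_eq_count_one_add_count_neg_one hL', hk', h1])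
    simp [ofUpCounts]
  | succ k ih =>
    obtain ⟨r, L', rfl⟩ := exists_eq_replicate_append_neg_one_cons hL (count_pos_iff.1 (by omega))
    have hL' : ∀ y ∈ L', y = 1 ∨ y = -1 := fun y hy => hL y (by simp [hy])
    have hk' : L'.count (-1) = k + 1 := by simpa [count_replicate] using hk
    have hlast' : L'.count 1 ≤ upsBefore L' k := by simpa [count_replicate] using hlast
    have htail : (Fin.tail fun t : Fin (k + 2) => p + upsBefore (replicate r 1 ++ -1 :: L') t) =
        fun t : Fin (k + 1) => (p + r) + upsBefore L' t := by
      funext t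
      simp [Fin.tail]
      omega
    have hhead : p + upsBefore (replicate r 1 ++ -1 :: L') ((0 : Fin (k + 2)) : ℕ) = p + r := by
      simp
    rw [ofUpCounts, htail, hhead, ih hL' hk' hlast', Nat.add_sub_cancel_left]

end BallotSequences

namespace BallotSeq

variable {n : ℕ} (L : BallotSeq n)

lemma count_neg_one : L.1.count (-1) = n + 1 := by
  have := length_eq_count_one_add_count_neg_one L.2.2.1
  rw [L.2.1, L.2.2.2.1] at this
  omega

lemma succ_le_upsBefore {t : ℕ} (ht : t ≤ n) : t + 1 ≤ upsBefore L.1 t := by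
  have := (forall_nonneg_add_sum_take_iff L.2.2.1 le_rfl).1 (by simpa using L.2.2.2.2) t
    (by rw [L.count_neg_one]; omega)
  omega

lemma upsBefore_le (t : ℕ) : upsBefore L.1 t ≤ n + 1 := by
  simpa [L.2.2.2.1] using upsBefore_le_count_one L.2.2.1 t

def toMonotoneInflationary : MonotoneInflationary n :=
  ⟨fun t => ⟨upsBefore L.1 t - 1, by have := L.upsBefore_le t; omega⟩,
    fun _ _ hab => Nat.sub_le_sub_right (monotone_upsBefore L.2.2.1 hab) 1,
    fun t => by
      show (t : ℕ) ≤ upsBefore L.1 t - 1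
      have := L.succ_le_upsBefore (Nat.lt_succ_iff.1 t.isLt)
      omega⟩

end BallotSeq

namespace MonotoneInflationary

variable {n : ℕ} (c : MonotoneInflationary n)

def toList : List ℤ := ofUpCounts (n + 1) 0 fun t => c.1 t + 1

lemma mem_toList : ∀ x ∈ c.toList, x = 1 ∨ x = -1 := fun _ => mem_ofUpCounts

lemma monotone_add_one : Monotone fun t => (c.1 t : ℕ) + 1 :=
  fun _ _ hab => Nat.succ_le_succ (c.2.1 hab)

lemma upsBefore_toList (t : Fin (n + 1)) : upsBefore c.toList t = c.1 t + 1 := by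
  simpa [toList] using upsBefore_ofUpCounts c.monotone_add_one (fun _ => Nat.zero_le _) t

lemma count_one_toList : c.toList.count 1 = n + 1 := by
  have hlast : c.1 (Fin.last n) = Fin.last n := le_antisymm (Fin.le_last _) (c.2.2 _)
  simpa [toList, hlast] using count_one_ofUpCounts c.monotone_add_one (fun _ => Nat.zero_le _)

lemma length_toList : c.toList.length = 2 * (n + 1) := by
  rw [length_eq_count_one_add_count_neg_one c.mem_toList, c.count_one_toList, toList,
    count_neg_one_ofUpCounts]
  ring

lemma sum_take_toList_nonneg (m : ℕ) : 0 ≤ (c.toList.take m).sum := by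
  have key := (forall_nonneg_add_sum_take_iff c.mem_toList le_rfl).2 fun t ht => ?_
  · simpa using key m
  rw [toList, count_neg_one_ofUpCounts] at ht
  have h1 := c.upsBefore_toList ⟨t, ht⟩
  have h2 : t ≤ c.1 ⟨t, ht⟩ := c.2.2 ⟨t, ht⟩
  simp only at h1
  omega

def toBallotSeq : BallotSeq n :=
  ⟨c.toList, c.length_toList, c.mem_toList, c.count_one_toList, c.sum_take_toList_nonneg⟩

end MonotoneInflationary

def MonotoneInflationary.equivBallotSeq (n : ℕ) : MonotoneInflationary n ≃ BallotSeq n where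
  toFun := MonotoneInflationary.toBallotSeq
  invFun := BallotSeq.toMonotoneInflationary
  left_inv c := Subtype.ext <| funext fun t => Fin.ext <| by
    simp [BallotSeq.toMonotoneInflationary, MonotoneInflationary.toBallotSeq, c.upsBefore_toList t]
  right_inv L := Subtype.ext <| by
    have hpos : ∀ t : Fin (n + 1), upsBefore L.1 t - 1 + 1 = 0 + upsBefore L.1 t := fun t => by
      have := L.succ_le_upsBefore (Nat.lt_succ_iff.1 t.isLt)
      omega
    simp only [BallotSeq.toMonotoneInflationary, MonotoneInflationary.toBallotSeq,
      MonotoneInflationary.toList, hpos]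
    exact ofUpCounts_upsBefore L.2.2.1 L.count_neg_one
      (L.2.2.2.1.trans_le (L.succ_le_upsBefore le_rfl)) 0

/-- There is a bijection between `RP_n` and the set of `±1`-sequences of length `2(n+1)`
with exactly `n+1` entries equal to `+1` (hence `n+1` equal to `-1`) all of whose
partial sums are nonnegative. -/
theorem rp_equiv_ballot_sequences (n : ℕ) :
    Nonempty ({f : PMap n // IsInj f ∧ IsOrd f ∧ IsRtop f} ≃
      {L : List ℤ // L.length = 2 * (n + 1) ∧ (∀ x ∈ L, x = 1 ∨ x = -1) ∧
        L.count 1 = n + 1 ∧ ∀ m : ℕ, 0 ≤ (L.take m).sum}) :=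
  ⟨(PMap.equivMonotoneInflationary n).trans (MonotoneInflationary.equivBallotSeq n)⟩
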